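/- Let σ > 0, let D ≥ 1, and let w_1, …, w_D be independent random vectors in ℝ^d whose coordinates are independent real Gaussian random variables with mean 0 and variance 1/σ². Then for all x, y ∈ ℝ^d, Var(φ(x) · φ(y)) = (1/(2D)) · (1 − exp(−z²))², where z = ‖x − y‖/σ. -/

import Mathlib

open scoped RealInnerProductSpace BigOperators
open MeasureTheory ProbabilityTheory

/-- The random feature map `φ(x) = D^{-1/2} (sin(w₁·x), …, sin(w_D·x), cos(w₁·x), …, cos(w_D·x))`. -/
noncomputable def randomFeatureMap {d D : ℕ} (w : Fin D → EuclideanSpace ℝ (Fin d))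
    (x : EuclideanSpace ℝ (Fin d)) : EuclideanSpace ℝ (Fin D ⊕ Fin D) :=
  WithLp.toLp 2 fun i => Real.sqrt (1 / D) *
    Sum.elim (fun j => Real.sin ⟪w j, x⟫) (fun j => Real.cos ⟪w j, x⟫) i

open scoped NNReal

/-!
Since `cos (a - b) = cos a cos b + sin a sin b`, the kernel estimate is the sample mean
`φ(x)·φ(y) = D⁻¹ ∑ᵢ cos (wᵢ·(x - y))`. Each `wᵢ·(x - y)` is a sum of independent centred
Gaussians, hence `N(0, z²)`, and the Gaussian characteristic function gives
`E cos = e^{-z²/2}`, `E cos² = (1 + e^{-2z²})/2`, so `Var cos = (1 - e^{-z²})² / 2`.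
Distinct rows `wᵢ` are independent, so the variance of the mean is this divided by `D`.
-/

lemma inner_randomFeatureMap {d D : ℕ} (w : Fin D → EuclideanSpace ℝ (Fin d))
    (x y : EuclideanSpace ℝ (Fin d)) :
    ⟪randomFeatureMap w x, randomFeatureMap w y⟫ = 1 / D * ∑ i, Real.cos ⟪w i, x - y⟫ := by
  have hsqrt : Real.sqrt (1 / D) * Real.sqrt (1 / D) = 1 / D := Real.mul_self_sqrt (by positivity)
  simp only [randomFeatureMap, PiLp.inner_apply, RCLike.inner_apply, conj_trivial,
    Fintype.sum_sum_type, Sum.elim_inl, Sum.elim_inr, ← Finset.sum_add_distrib, Finset.mul_sum,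
    inner_sub_right, Real.cos_sub]
  refine Finset.sum_congr rfl fun i _ => ?_
  linear_combination
    (Real.sin ⟪w i, x⟫ * Real.sin ⟪w i, y⟫ + Real.cos ⟪w i, x⟫ * Real.cos ⟪w i, y⟫) * hsqrt

namespace ProbabilityTheory

lemma integral_cos_mul_gaussianReal (v : ℝ≥0) (t : ℝ) :
    ∫ x, Real.cos (t * x) ∂gaussianReal 0 v = Real.exp (-(v * t ^ 2 / 2)) := by
  have h := congrArg Complex.re (charFun_gaussianReal (μ := 0) (v := v) t)
  have hint : Integrable (fun x : ℝ => Complex.exp (t * x * Complex.I)) (gaussianReal 0 v) :=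
    (integrable_const (1 : ℝ)).mono' (by fun_prop)
      (.of_forall fun x => by simp [← Complex.ofReal_mul, Complex.norm_exp_ofReal_mul_I])
  have hexp : (t * (0 : ℝ) * Complex.I - v * t ^ 2 / 2 : ℂ) = ((-(v * t ^ 2 / 2) : ℝ) : ℂ) := by
    push_cast; ring
  rw [charFun_apply_real, ← RCLike.re_eq_complex_re, ← integral_re hint, hexp,
    RCLike.re_eq_complex_re, Complex.exp_ofReal_re] at h
  simpa [← Complex.ofReal_mul, Complex.exp_ofReal_mul_I_re] using h

lemma variance_cos_gaussianReal (v : ℝ≥0) :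
    Var[Real.cos; gaussianReal 0 v] = (1 - Real.exp (-v)) ^ 2 / 2 := by
  have hcos : MemLp Real.cos 2 (gaussianReal 0 v) :=
    MemLp.of_bound (by fun_prop) 1 (.of_forall fun x => by simpa using Real.abs_cos_le_one x)
  have hcos2 : Integrable (fun x => Real.cos (2 * x)) (gaussianReal 0 v) :=
    (integrable_const (1 : ℝ)).mono' (by fun_prop)
      (.of_forall fun x => by simpa using Real.abs_cos_le_one _)
  have hmean : ∫ x, Real.cos x ∂gaussianReal 0 v = Real.exp (-v / 2) := by
    simpa [neg_div] using integral_cos_mul_gaussianReal v 1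
  have hsq : ∫ x, Real.cos x ^ 2 ∂gaussianReal 0 v = 1 / 2 + Real.exp (-(2 * v)) / 2 := by
    simp_rw [Real.cos_sq]
    rw [integral_add (integrable_const _) (hcos2.div_const 2), integral_const, integral_div,
      integral_cos_mul_gaussianReal]
    rw [probReal_univ, smul_eq_mul, one_mul]
    ring_nf
  rw [variance_eq_sub hcos]
  simp only [Pi.pow_apply, hsq, hmean]
  have h1 : Real.exp (-v / 2) ^ 2 = Real.exp (-v) := by rw [← Real.exp_nat_mul]; ring_nf
  have h2 : Real.exp (-(2 * v)) = Real.exp (-v) ^ 2 := by rw [← Real.exp_nat_mul]; ring_nf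
  rw [h1, h2]
  ring

variable {Ω ι : Type*} [MeasurableSpace Ω] {P : Measure Ω}

lemma map_sum_eq_gaussianReal_of_iIndepFun [Fintype ι] {X : ι → Ω → ℝ} (hX : iIndepFun X P)
    {m : ι → ℝ} {v : ι → ℝ≥0} (hlaw : ∀ i, P.map (X i) = gaussianReal (m i) (v i)) :
    P.map (fun ω => ∑ i, X i ω) = gaussianReal (∑ i, m i) (∑ i, v i) := by
  have := hX.isProbabilityMeasure
  have hmeas : ∀ i, AEMeasurable (X i) P := fun i =>
    .of_map_ne_zero (by simp [hlaw, NeZero.ne])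
  have : IsProbabilityMeasure (P.map fun ω => ∑ i, X i ω) :=
    Measure.isProbabilityMeasure_map (Finset.aemeasurable_fun_sum _ fun i _ => hmeas i)
  refine Measure.ext_of_charFun (funext fun t => ?_)
  rw [hX.charFun_map_fun_sum_eq_prod hmeas, Finset.prod_apply]
  simp_rw [hlaw, charFun_gaussianReal, ← Complex.exp_sum]
  congr 1
  push_cast
  simp only [Finset.sum_sub_distrib, Finset.mul_sum, Finset.sum_mul, Finset.sum_div]

lemma map_inner_eq_gaussianReal [Fintype ι] {W : Ω → EuclideanSpace ℝ ι}
    (hW : iIndepFun (fun k ω => W ω k) P) {v : ℝ≥0}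
    (hlaw : ∀ k, P.map (fun ω => W ω k) = gaussianReal 0 v) (t : EuclideanSpace ℝ ι) :
    P.map (fun ω => ⟪W ω, t⟫) = gaussianReal 0 (‖t‖₊ ^ 2 * v) := by
  have hmeas : ∀ k, AEMeasurable (fun ω => W ω k) P := fun k =>
    .of_map_ne_zero (by simp [hlaw, NeZero.ne])
  have hsum := map_sum_eq_gaussianReal_of_iIndepFun
    (hW.comp (fun k x => t k * x) fun k => measurable_const_mul _) fun k => by
      rw [← AEMeasurable.map_map_of_aemeasurable (by fun_prop) (hmeas k), hlaw,
        gaussianReal_map_const_mul, mul_zero]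
  convert hsum using 2
  · ext ω
    simp [PiLp.inner_apply]
  · simp
  · ext
    push_cast
    rw [← Finset.sum_mul, EuclideanSpace.norm_sq_eq]
    simp

lemma iIndepFun.indepFun_row {κ β : Type*} [Fintype κ] [MeasurableSpace β]
    {X : ι × κ → Ω → β} (h : iIndepFun X P) (hX : ∀ p, AEMeasurable (X p) P) {i j : ι}
    (hij : i ≠ j) : IndepFun (fun ω k => X (i, k) ω) (fun ω k => X (j, k) ω) P := by
  let row (a : ι) : Finset (ι × κ) := Finset.univ.map ⟨Prod.mk a, Prod.mk_right_injective a⟩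
  have hdisj : Disjoint (row i) (row j) := by
    simp [row, Finset.disjoint_left, hij.symm]
  refine (h.indepFun_finset₀ (row i) (row j) hdisj hX).comp
    (φ := fun u k => u ⟨(i, k), by simp [row]⟩) (ψ := fun u k => u ⟨(j, k), by simp [row]⟩)
    (measurable_pi_lambda _ fun _ => measurable_pi_apply _)
    (measurable_pi_lambda _ fun _ => measurable_pi_apply _)

lemma variance_mean_of_pairwise_indepFun {n : ℕ} {X : Fin n → Ω → ℝ}
    (hX : ∀ i, MemLp (X i) 2 P) (hind : Pairwise fun i j => X i ⟂ᵢ[P] X j) {c : ℝ}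
    (hvar : ∀ i, Var[X i; P] = c) :
    Var[fun ω => 1 / n * ∑ i, X i ω; P] = c / n := by
  have hsum : Var[∑ i, X i; P] = n * c := by
    rw [IndepFun.variance_sum (fun i _ => hX i) fun i _ j _ hij => hind hij]
    simp [hvar]
  have hmean : (fun ω => 1 / n * ∑ i, X i ω) = fun ω => 1 / n * (∑ i, X i) ω := by
    simp only [Finset.sum_apply]
  rw [hmean, variance_const_mul, hsum]
  rcases eq_or_ne (n : ℝ) 0 with hn | hn
  · simp [hn]
  · field_simp

end ProbabilityTheory

/-- Variance of random Fourier features: with `D ≥ 1` random vectors `w₁, …, w_D ∈ ℝ^d` whose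
`D·d` coordinates are jointly independent `N(0, 1/σ²)` Gaussians,
`Var(φ(x)·φ(y)) = (1/(2D)) (1 − exp(−z²))²` where `z = ‖x − y‖/σ`. -/
theorem variance_randomFeatureMap_inner {d D : ℕ} (σ : ℝ)
    {Ω : Type*} [MeasurableSpace Ω] (μ : Measure Ω) [IsProbabilityMeasure μ]
    (W : Fin D → Ω → EuclideanSpace ℝ (Fin d))
    (hindep : iIndepFun
      (fun (p : Fin D × Fin d) ω => W p.1 ω p.2) μ)
    (hgauss : ∀ (i : Fin D) (j : Fin d),
      Measure.map (fun ω => W i ω j) μ = gaussianReal 0 ⟨1 / σ ^ 2, by positivity⟩)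
    (x y : EuclideanSpace ℝ (Fin d)) :
    variance
        (fun ω => ⟪randomFeatureMap (fun i => W i ω) x, randomFeatureMap (fun i => W i ω) y⟫) μ =
      1 / (2 * D) * (1 - Real.exp (-(‖x - y‖ / σ) ^ 2)) ^ 2 := by
  obtain ⟨v, hv, hgauss⟩ : ∃ v : ℝ≥0, (v : ℝ) = 1 / σ ^ 2 ∧
      ∀ i j, μ.map (fun ω => W i ω j) = gaussianReal 0 v := ⟨_, rfl, hgauss⟩
  have hlaw (i : Fin D) : μ.map (fun ω => ⟪W i ω, x - y⟫) = gaussianReal 0 (‖x - y‖₊ ^ 2 * v) :=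
    map_inner_eq_gaussianReal (hindep.precomp (Prod.mk_right_injective i)) (hgauss i) (x - y)
  have hZ (i : Fin D) : AEMeasurable (fun ω => ⟪W i ω, x - y⟫) μ :=
    .of_map_ne_zero (by simp [hlaw, NeZero.ne])
  have hvar (i : Fin D) : Var[fun ω => Real.cos ⟪W i ω, x - y⟫; μ]
      = (1 - Real.exp (-(‖x - y‖ / σ) ^ 2)) ^ 2 / 2 := by
    rw [← Function.comp_def, ← variance_map (by fun_prop) (hZ i), hlaw, variance_cos_gaussianReal]
    push_cast [hv, div_pow]
    ring_nf
  have hind : Pairwise fun i j =>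
      (fun ω => Real.cos ⟪W i ω, x - y⟫) ⟂ᵢ[μ] (fun ω => Real.cos ⟪W j ω, x - y⟫) := by
    intro i j hij
    have hcos : Measurable fun u : Fin d → ℝ => Real.cos ⟪WithLp.toLp 2 u, x - y⟫ := by fun_prop
    exact (hindep.indepFun_row (fun p => .of_map_ne_zero (by simp [hgauss, NeZero.ne])) hij).comp
      hcos hcos
  have hmemLp (i : Fin D) : MemLp (fun ω => Real.cos ⟪W i ω, x - y⟫) 2 μ :=
    MemLp.of_bound (hZ i).cos.aestronglyMeasurable 1
      (.of_forall fun ω => by simpa using Real.abs_cos_le_one _)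
  simp_rw [inner_randomFeatureMap]
  rw [variance_mean_of_pairwise_indepFun hmemLp hind hvar]
  ring
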